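/- Let (G,w) be a connected finite weighted graph on at least k+1 vertices with positive real edge weights in which every vertex is incident to at least k edges. Assume all edge weights are pairwise distinct, and that for every vertex u the distances dist_{G,w}(u,v), v ≠ u, are pairwise distinct, and likewise the distances dist_{G^k,w}(u,v), v ≠ u, (where finite) are pairwise distinct. For each vertex u let E^k(u) be the set of the k edges incident to u of smallest weight, and let G^k be the spanning subgraph of G with edge set ⋃_{u} E^k(u). Then for every vertex u: there are at least k vertices at finite distance from u in (G^k,w), the set of the k vertices nearest to u in (G^k,w) equals the set of the k vertices nearest to u in (G,w), and for every vertex v in this set, dist_{G^k,w}(u,v) = dist_{G,w}(u,v). -/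

import Mathlib

open SimpleGraph
open scoped ENNReal

noncomputable section

/-- The weight of a walk: the sum of the weights of its edges (with multiplicity). -/
def walkWeight {V : Type*} {G : SimpleGraph V} (w : Sym2 V → ℝ) {u v : V}
    (p : G.Walk u v) : ℝ :=
  (p.edges.map w).sum

/-- The distance between `u` and `v`: the minimum weight of a `u`–`v` walk (`∞` if none). -/
def wdist {V : Type*} (G : SimpleGraph V) (w : Sym2 V → ℝ) (u v : V) : ℝ≥0∞ :=
  ⨅ p : G.Walk u v, ENNReal.ofReal (walkWeight w p)

/-- The `h`-hop distance between `u` and `v`: the minimum weight of a `u`–`v` walk with at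
most `h` edges (`∞` if none). -/
def hopDist {V : Type*} (G : SimpleGraph V) (w : Sym2 V → ℝ) (h : ℕ) (u v : V) : ℝ≥0∞ :=
  ⨅ p : {p : G.Walk u v // p.length ≤ h}, ENNReal.ofReal (walkWeight w p.1)

/-!
Let `T` be the `k` nearest vertices to `u` in `G`. If `ab` is the last edge of a shortest walk
from `u` to `b ∈ T`, then `ab` is among the `k` lightest edges at `a`: otherwise the far ends of
the `k` lighter edges at `a`, together with `a`, would give `k` vertices other than `u` strictly
nearer to `u` than `b`, hence `k + 1` vertices in `T`. As `a` is `u` or a nearer vertex of `T`,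
induction on the distance from `u` shows that `Gk` contains a shortest walk to every vertex of `T`.
-/

section WeightedDistance

variable {V : Type*} {G : SimpleGraph V} {w : Sym2 V → ℝ}

lemma walkWeight_nil {a : V} : walkWeight w (Walk.nil : G.Walk a a) = 0 := by
  simp [walkWeight]

lemma walkWeight_cons {a b c : V} (h : G.Adj a b) (p : G.Walk b c) :
    walkWeight w (Walk.cons h p) = w s(a, b) + walkWeight w p := by
  simp [walkWeight]

lemma walkWeight_append {a b c : V} (p : G.Walk a b) (q : G.Walk b c) :
    walkWeight w (p.append q) = walkWeight w p + walkWeight w q := by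
  simp [walkWeight, Walk.edges_append]

lemma walkWeight_reverse {a b : V} (p : G.Walk a b) :
    walkWeight w p.reverse = walkWeight w p := by
  simp [walkWeight, Walk.edges_reverse, List.sum_reverse]

lemma walkWeight_nonneg (hw : ∀ e ∈ G.edgeSet, 0 ≤ w e) {a b : V} (p : G.Walk a b) :
    0 ≤ walkWeight w p :=
  List.sum_nonneg fun _ hx => by
    obtain ⟨e, he, rfl⟩ := List.mem_map.mp hx
    exact hw e (p.edges_subset_edgeSet he)

lemma walkWeight_bypass_le [DecidableEq V] (hw : ∀ e ∈ G.edgeSet, 0 ≤ w e) {a b : V}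
    (p : G.Walk a b) : walkWeight w p.bypass ≤ walkWeight w p :=
  (p.edges_bypass_sublist_edges.map w).sum_le_sum fun _ hx => by
    obtain ⟨e, he, rfl⟩ := List.mem_map.mp hx
    exact hw e (p.edges_subset_edgeSet he)

lemma wdist_le_walkWeight {u v : V} (p : G.Walk u v) :
    wdist G w u v ≤ ENNReal.ofReal (walkWeight w p) :=
  iInf_le _ p

lemma wdist_self (u : V) : wdist G w u u = 0 :=
  nonpos_iff_eq_zero.mp <| by
    simpa [walkWeight_nil] using wdist_le_walkWeight (w := w) (.nil : G.Walk u u)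

lemma wdist_lt_top {u v : V} (h : G.Reachable u v) : wdist G w u v < ⊤ :=
  h.elim fun p => (wdist_le_walkWeight p).trans_lt ENNReal.ofReal_lt_top

lemma wdist_le_of_le {G' : SimpleGraph V} (hle : G' ≤ G) (u v : V) :
    wdist G w u v ≤ wdist G' w u v :=
  le_iInf fun p => by
    simpa [walkWeight, Walk.edges_transfer] using wdist_le_walkWeight (w := w)
      (p.transfer G fun e he => edgeSet_mono hle (p.edges_subset_edgeSet he))

lemma wdist_le_add_of_adj (hw : ∀ e ∈ G.edgeSet, 0 ≤ w e) (u : V) {a b : V} (h : G.Adj a b) :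
    wdist G w u b ≤ wdist G w u a + ENNReal.ofReal (w s(a, b)) := by
  conv_rhs => rw [wdist, ENNReal.iInf_add]
  refine le_iInf fun p => ?_
  calc wdist G w u b ≤ ENNReal.ofReal (walkWeight w (p.append (.cons h .nil))) :=
        wdist_le_walkWeight _
    _ = _ := by
      rw [walkWeight_append, walkWeight_cons, walkWeight_nil, add_zero,
        ENNReal.ofReal_add (walkWeight_nonneg hw p) (hw _ h)]

lemma exists_walk_wdist_eq [Fintype V] (hw : ∀ e ∈ G.edgeSet, 0 ≤ w e) {u v : V}
    (h : G.Reachable u v) :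
    ∃ p : G.Walk u v, wdist G w u v = ENNReal.ofReal (walkWeight w p) := by
  classical
  have : Nonempty (G.Path u v) := h.elim fun p => ⟨p.toPath⟩
  obtain ⟨p, hp⟩ := Finite.exists_min fun p : G.Path u v => walkWeight w p.1
  refine ⟨p.1, le_antisymm (wdist_le_walkWeight _) (le_iInf fun q => ?_)⟩
  exact ENNReal.ofReal_le_ofReal ((hp q.toPath).trans (walkWeight_bypass_le hw q))

lemma exists_adj_wdist_eq_add [Fintype V] (hw : ∀ e ∈ G.edgeSet, 0 ≤ w e) {u v : V}
    (h : G.Reachable u v) (hne : u ≠ v) :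
    ∃ a, G.Adj a v ∧ wdist G w u v = wdist G w u a + ENNReal.ofReal (w s(a, v)) := by
  obtain ⟨p, hp⟩ := exists_walk_wdist_eq hw h
  rw [← walkWeight_reverse] at hp
  generalize p.reverse = r at hp
  cases r with
  | nil => exact absurd rfl hne
  | @cons _ a _ hva q =>
    refine ⟨a, hva.symm, le_antisymm (wdist_le_add_of_adj hw u hva.symm) ?_⟩
    rw [hp, walkWeight_cons, ENNReal.ofReal_add (hw s(v, a) hva) (walkWeight_nonneg hw q),
      ← walkWeight_reverse q, Sym2.eq_swap, add_comm]
    gcongr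
    exact wdist_le_walkWeight _

end WeightedDistance

lemma exists_subset_card_eq_forall_lt {α β : Type*} [DecidableEq α] [LinearOrder β]
    (f : α → β) (k : ℕ) (S : Finset α) (hk : k ≤ S.card) (hf : Set.InjOn f S) :
    ∃ T ⊆ S, T.card = k ∧ ∀ y ∈ T, ∀ y' ∈ S, y' ∉ T → f y < f y' := by
  induction k generalizing S with
  | zero => exact ⟨∅, Finset.empty_subset _, rfl, by simp⟩
  | succ n ih =>
    obtain ⟨m, hm, hmin⟩ := S.exists_min_image f (Finset.card_pos.mp (by omega))
    obtain ⟨T, hTS, hTcard, hT⟩ := ih (S.erase m)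
      (by rw [Finset.card_erase_of_mem hm]; omega) (hf.mono (Finset.erase_subset m S))
    have hmT : m ∉ T := fun h => Finset.notMem_erase m S (hTS h)
    refine ⟨insert m T, Finset.insert_subset hm (hTS.trans (Finset.erase_subset m S)),
      by rw [Finset.card_insert_of_notMem hmT, hTcard], fun y hy y' hy' hy'T => ?_⟩
    have hy'm : y' ≠ m := fun h => hy'T (h ▸ Finset.mem_insert_self m T)
    rcases Finset.mem_insert.mp hy with rfl | hy
    · exact (hmin y' hy').lt_of_ne fun h => hy'm (hf hy' hm h.symm)
    · exact hT y hy y' (Finset.mem_erase.mpr ⟨hy'm, hy'⟩)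
        fun h => hy'T (Finset.mem_insert_of_mem h)

lemma card_lt_of_forall_lt_of_mem {α β : Type*} [DecidableEq α] [LinearOrder β] {f : α → β}
    {u b : α} {T W : Finset α} (hT : ∀ y ∈ T, ∀ y', y' ∉ T → y' ≠ u → f y < f y')
    (hb : b ∈ T) (hW : ∀ z ∈ W, z ≠ u ∧ f z < f b) : W.card < T.card := by
  have hWT : W ⊆ T.erase b := fun z hz => by
    have hzT : z ∈ T := by
      by_contra hzT
      exact lt_asymm (hW z hz).2 (hT b hb z hzT (hW z hz).1)
    exact Finset.mem_erase.mpr ⟨fun h => lt_irrefl _ (h ▸ (hW z hz).2), hzT⟩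
  exact (Finset.card_le_card hWT).trans_lt (Finset.card_erase_lt_of_mem hb)

lemma card_filter_mk_mem {α : Type*} [Fintype α] [DecidableEq α] {a : α} {E : Finset (Sym2 α)}
    (hE : ∀ e ∈ E, a ∈ e) : (Finset.univ.filter fun z => s(a, z) ∈ E).card = E.card := by
  have hE : E = (Finset.univ.filter fun z => s(a, z) ∈ E).image fun z => s(a, z) := by
    ext e
    simp only [Finset.mem_image, Finset.mem_filter, Finset.mem_univ, true_and]
    refine ⟨fun he => ?_, fun ⟨z, hz, hze⟩ => hze ▸ hz⟩
    obtain ⟨z, rfl⟩ := Sym2.mem_iff_exists.mp (hE e he)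
    exact ⟨z, he, rfl⟩
  conv_rhs => rw [hE]
  exact (Finset.card_image_of_injective _ fun _ _ => Sym2.congr_right.mp).symm

section NearestNeighbours

variable {V : Type*} [Fintype V] {G : SimpleGraph V} {w : Sym2 V → ℝ} {k : ℕ}
  {Ek : V → Finset (Sym2 V)}

lemma mem_lightest_of_adj_of_mem_nearest (hw : ∀ e ∈ G.edgeSet, 0 < w e)
    (hwdistinct : ∀ e ∈ G.edgeSet, ∀ e' ∈ G.edgeSet, w e = w e' → e = e')
    (hEkcard : ∀ u, (Ek u).card = k)
    (hEkinc : ∀ u, ∀ e ∈ Ek u, e ∈ G.incidenceSet u)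
    (hEkmin : ∀ u, ∀ e ∈ Ek u, ∀ e' ∈ G.incidenceSet u, e' ∉ Ek u → w e ≤ w e')
    {u : V} {T : Finset V} (hTcard : T.card = k)
    (hT : ∀ y ∈ T, ∀ y' : V, y' ∉ T → y' ≠ u → wdist G w u y < wdist G w u y')
    {a b : V} (hb : b ∈ T) (hab : G.Adj a b) (ha : wdist G w u a ≠ ⊤)
    (htight : wdist G w u a + ENNReal.ofReal (w s(a, b)) ≤ wdist G w u b) :
    s(a, b) ∈ Ek a := by
  classical
  by_contra hnot
  have hw0 : ∀ e ∈ G.edgeSet, 0 ≤ w e := fun e he => (hw e he).le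
  set Z := Finset.univ.filter fun z => s(a, z) ∈ Ek a
  have hZcard : Z.card = k :=
    (card_filter_mk_mem fun e he => (hEkinc a e he).2).trans (hEkcard a)
  have hZ : ∀ z ∈ Z, wdist G w u z < wdist G w u b := fun z hz => by
    have hz : s(a, z) ∈ Ek a := (Finset.mem_filter.mp hz).2
    have haz : G.Adj a z := (hEkinc a _ hz).1
    have hlt : w s(a, z) < w s(a, b) :=
      (hEkmin a _ hz _ (G.mk'_mem_incidenceSet_left_iff.mpr hab) hnot).lt_of_ne
        fun h => hnot (hwdistinct _ haz _ hab h ▸ hz)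
    calc wdist G w u z ≤ wdist G w u a + ENNReal.ofReal (w s(a, z)) :=
          wdist_le_add_of_adj hw0 u haz
      _ < wdist G w u a + ENNReal.ofReal (w s(a, b)) :=
          ENNReal.add_lt_add_left ha ((ENNReal.ofReal_lt_ofReal_iff (hw _ hab)).mpr hlt)
      _ ≤ wdist G w u b := htight
  have haZ : a ∉ Z := fun h => G.irrefl (hEkinc a _ (Finset.mem_filter.mp h).2).1
  have hab_lt : wdist G w u a < wdist G w u b :=
    (ENNReal.lt_add_right ha (by simpa using hw _ hab)).trans_le htight
  have hcloser : ∀ z ∈ (insert a Z).erase u, z ≠ u ∧ wdist G w u z < wdist G w u b := by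
    intro z hz
    obtain ⟨hzu, hz⟩ := Finset.mem_erase.mp hz
    rcases Finset.mem_insert.mp hz with rfl | hz
    exacts [⟨hzu, hab_lt⟩, ⟨hzu, hZ z hz⟩]
  have hlt := card_lt_of_forall_lt_of_mem hT hb hcloser
  have hle := Finset.pred_card_le_card_erase (s := insert a Z) (a := u)
  rw [Finset.card_insert_of_notMem haZ, hZcard] at hle
  omega

lemma wdist_eq_of_mem_nearest (hw : ∀ e ∈ G.edgeSet, 0 < w e) (hconn : G.Connected)
    (hwdistinct : ∀ e ∈ G.edgeSet, ∀ e' ∈ G.edgeSet, w e = w e' → e = e')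
    (hEkcard : ∀ u, (Ek u).card = k)
    (hEkinc : ∀ u, ∀ e ∈ Ek u, e ∈ G.incidenceSet u)
    (hEkmin : ∀ u, ∀ e ∈ Ek u, ∀ e' ∈ G.incidenceSet u, e' ∉ Ek u → w e ≤ w e')
    {Gk : SimpleGraph V}
    (hGk : ∀ a b : V, Gk.Adj a b ↔ (G.Adj a b ∧ ∃ x : V, s(a, b) ∈ Ek x))
    {u : V} {T : Finset V} (hTu : u ∉ T) (hTcard : T.card = k)
    (hT : ∀ y ∈ T, ∀ y' : V, y' ∉ T → y' ≠ u → wdist G w u y < wdist G w u y') {v : V}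
    (hv : v ∈ T) : wdist Gk w u v = wdist G w u v := by
  have hw0 : ∀ e ∈ G.edgeSet, 0 ≤ w e := fun e he => (hw e he).le
  have hGkG : Gk ≤ G := fun a b h => ((hGk a b).mp h).1
  refine le_antisymm ?_ (wdist_le_of_le hGkG u v)
  let r : V → V → Prop := fun a b => wdist G w u a < wdist G w u b
  have : IsTrans V r := ⟨fun _ _ _ => lt_trans⟩
  have : Std.Irrefl r := ⟨fun _ => lt_irrefl _⟩
  suffices h : ∀ v, (v = u ∨ v ∈ T) → wdist Gk w u v ≤ wdist G w u v from h v (Or.inr hv)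
  intro v
  induction v using (Finite.wellFounded_of_trans_of_irrefl r).induction with | _ v ih
  rintro (rfl | hv)
  · simp [wdist_self]
  have hvu : u ≠ v := fun h => hTu (h ▸ hv)
  obtain ⟨a, hav, hva⟩ := exists_adj_wdist_eq_add hw0 (hconn.preconnected u v) hvu
  have ha : wdist G w u a ≠ ⊤ := (wdist_lt_top (hconn.preconnected u a)).ne
  have hav_lt : wdist G w u a < wdist G w u v :=
    hva ▸ ENNReal.lt_add_right ha (by simpa using hw _ hav)
  have ha' : a = u ∨ a ∈ T := or_iff_not_imp_left.mpr fun hau => by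
    by_contra haT
    exact lt_asymm hav_lt (hT v hv a haT hau)
  have hGkav : Gk.Adj a v := (hGk a v).mpr ⟨hav, a,
    mem_lightest_of_adj_of_mem_nearest hw hwdistinct hEkcard hEkinc hEkmin hTcard hT hv hav ha
      hva.ge⟩
  calc wdist Gk w u v ≤ wdist Gk w u a + ENNReal.ofReal (w s(a, v)) :=
        wdist_le_add_of_adj (fun e he => hw0 e (edgeSet_mono hGkG he)) u hGkav
    _ ≤ wdist G w u a + ENNReal.ofReal (w s(a, v)) := by gcongr; exact ih a hav_lt ha'
    _ = wdist G w u v := hva.symm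

end NearestNeighbours

theorem stmt_8_general {V : Type*} [Fintype V] (G : SimpleGraph V) (w : Sym2 V → ℝ)
    (hw : ∀ e ∈ G.edgeSet, 0 < w e) (hconn : G.Connected)
    (k : ℕ) (hcard : k + 1 ≤ Fintype.card V)
    -- all edge weights are pairwise distinct
    (hwdistinct : ∀ e ∈ G.edgeSet, ∀ e' ∈ G.edgeSet, w e = w e' → e = e')
    -- distances from each vertex in `G` are pairwise distinct
    (hGdistinct : ∀ u : V, ∀ y y' : V, y ≠ u → y' ≠ u →
      wdist G w u y = wdist G w u y' → y = y')
    -- `Ek u` is the set of the `k` edges incident to `u` of smallest weight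
    (Ek : V → Finset (Sym2 V))
    (hEkcard : ∀ u, (Ek u).card = k)
    (hEkinc : ∀ u, ∀ e ∈ Ek u, e ∈ G.incidenceSet u)
    (hEkmin : ∀ u, ∀ e ∈ Ek u, ∀ e' ∈ G.incidenceSet u, e' ∉ Ek u → w e ≤ w e')
    -- `Gk` is the spanning subgraph of `G` with edge set `⋃ u, Ek u`
    (Gk : SimpleGraph V)
    (hGk : ∀ a b : V, Gk.Adj a b ↔ (G.Adj a b ∧ ∃ x : V, s(a, b) ∈ Ek x)) :
    ∀ u : V,
      -- at least `k` vertices are at finite distance from `u` in `(Gk, w)`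
      k ≤ {v : V | v ≠ u ∧ wdist Gk w u v < ⊤}.ncard ∧
      -- the `k` nearest vertices to `u` in `(Gk, w)` are the `k` nearest in `(G, w)`,
      -- with equal distances
      ∃ T : Finset V, u ∉ T ∧ T.card = k ∧
        (∀ y ∈ T, ∀ y' : V, y' ∉ T → y' ≠ u → wdist G w u y < wdist G w u y') ∧
        (∀ y ∈ T, ∀ y' : V, y' ∉ T → y' ≠ u → wdist Gk w u y < wdist Gk w u y') ∧
        (∀ v ∈ T, wdist Gk w u v = wdist G w u v) := by
  classical
  intro u
  obtain ⟨T, hTS, hTcard, hTmin⟩ := exists_subset_card_eq_forall_lt (wdist G w u) k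
    (Finset.univ.erase u)
    (by rw [Finset.card_erase_of_mem (Finset.mem_univ u), Finset.card_univ]; omega)
    fun y hy y' hy' => hGdistinct u y y' (Finset.ne_of_mem_erase hy) (Finset.ne_of_mem_erase hy')
  have hTu : u ∉ T := fun h => Finset.notMem_erase u _ (hTS h)
  have hT : ∀ y ∈ T, ∀ y' : V, y' ∉ T → y' ≠ u → wdist G w u y < wdist G w u y' :=
    fun y hy y' hy'T hy'u => hTmin y hy y' (Finset.mem_erase.mpr ⟨hy'u, Finset.mem_univ _⟩) hy'T
  have heq : ∀ v ∈ T, wdist Gk w u v = wdist G w u v := fun v hv =>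
    wdist_eq_of_mem_nearest hw hconn hwdistinct hEkcard hEkinc hEkmin hGk hTu hTcard hT hv
  refine ⟨?_, T, hTu, hTcard, hT, fun y hy y' hy'T hy'u => ?_, heq⟩
  · have hTfin : (T : Set V) ⊆ {v | v ≠ u ∧ wdist Gk w u v < ⊤} := fun v hv =>
      ⟨fun h => hTu (h ▸ hv), heq v hv ▸ wdist_lt_top (hconn.preconnected u v)⟩
    simpa [hTcard] using Set.ncard_le_ncard hTfin
  · calc wdist Gk w u y = wdist G w u y := heq y hy
      _ < wdist G w u y' := hT y hy y' hy'T hy'u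
      _ ≤ wdist Gk w u y' := wdist_le_of_le (fun a b h => ((hGk a b).mp h).1) u y'

theorem stmt_8 {V : Type*} [Fintype V] (G : SimpleGraph V) (w : Sym2 V → ℝ)
    (hw : ∀ e ∈ G.edgeSet, 0 < w e) (hconn : G.Connected)
    (k : ℕ) (hk1 : 1 ≤ k) (hcard : k + 1 ≤ Fintype.card V)
    -- every vertex is incident to at least `k` edges
    (hdeg : ∀ u : V, k ≤ (G.incidenceSet u).ncard)
    -- all edge weights are pairwise distinct
    (hwdistinct : ∀ e ∈ G.edgeSet, ∀ e' ∈ G.edgeSet, w e = w e' → e = e')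
    -- distances from each vertex in `G` are pairwise distinct
    (hGdistinct : ∀ u : V, ∀ y y' : V, y ≠ u → y' ≠ u →
      wdist G w u y = wdist G w u y' → y = y')
    -- `Ek u` is the set of the `k` edges incident to `u` of smallest weight
    (Ek : V → Finset (Sym2 V))
    (hEkcard : ∀ u, (Ek u).card = k)
    (hEkinc : ∀ u, ∀ e ∈ Ek u, e ∈ G.incidenceSet u)
    (hEkmin : ∀ u, ∀ e ∈ Ek u, ∀ e' ∈ G.incidenceSet u, e' ∉ Ek u → w e ≤ w e')
    -- `Gk` is the spanning subgraph of `G` with edge set `⋃ u, Ek u`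
    (Gk : SimpleGraph V)
    (hGk : ∀ a b : V, Gk.Adj a b ↔ (G.Adj a b ∧ ∃ x : V, s(a, b) ∈ Ek x))
    -- finite distances from each vertex in `Gk` are pairwise distinct
    (hGkdistinct : ∀ u : V, ∀ y y' : V, y ≠ u → y' ≠ u → wdist Gk w u y < ⊤ →
      wdist Gk w u y = wdist Gk w u y' → y = y') :
    ∀ u : V,
      -- at least `k` vertices are at finite distance from `u` in `(Gk, w)`
      k ≤ {v : V | v ≠ u ∧ wdist Gk w u v < ⊤}.ncard ∧
      -- the `k` nearest vertices to `u` in `(Gk, w)` are the `k` nearest in `(G, w)`,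
      -- with equal distances
      ∃ T : Finset V, u ∉ T ∧ T.card = k ∧
        (∀ y ∈ T, ∀ y' : V, y' ∉ T → y' ≠ u → wdist G w u y < wdist G w u y') ∧
        (∀ y ∈ T, ∀ y' : V, y' ∉ T → y' ≠ u → wdist Gk w u y < wdist Gk w u y') ∧
        (∀ v ∈ T, wdist Gk w u v = wdist G w u v) :=
  stmt_8_general G w hw hconn k hcard hwdistinct hGdistinct Ek hEkcard hEkinc hEkmin Gk hGk
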